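/- arXiv:2602.06668 — 2 statements merged into one kernel-verified Lean document; each statement's English description precedes it below -/
import Mathlib

section
/- Let σ(x) = Px + a be a nontrivial affine permutation of F_q^n (i.e., (P, a) ≠ (I, 0)). Then the number of orbits of the cyclic group generated by σ acting on F_q^n is at most (q^n + q^(n-1))/2 = ((q+1)/(2q))·q^n. -/
/-!
Every orbit of `⟨σ⟩` that is not a fixed point has at least two elements, so twice the number
of orbits is at most `q ^ n` plus the number of fixed points of `σ`. The fixed points of
`x ↦ P x + a` are either empty or a coset of `ker (P - 1)`, and `(P, a) ≠ (1, 0)` forces this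
kernel to be a proper subspace whenever a fixed point exists, so there are at most `q ^ (n - 1)`.
-/

open MulAction Module

namespace MulAction

variable {G α : Type*} [Group G] [MulAction G α]

theorem fixedPoints_zpowers (g : G) : fixedPoints (Subgroup.zpowers g) α = fixedBy α g := by
  ext x
  simp only [mem_fixedPoints, Subtype.forall, Subgroup.mk_smul]
  exact Subgroup.forall_mem_zpowers.trans mem_fixedBy_zpowers_iff_mem_fixedBy

theorem two_mul_card_orbitRel_quotient_le [Finite α] :
    2 * Nat.card (orbitRel.Quotient G α) ≤ Nat.card α + Nat.card (fixedPoints G α) := by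
  classical
  cases nonempty_fintype α
  let π : α → orbitRel.Quotient G α := Quotient.mk _
  let fixed : Finset α := Finset.univ.filter (· ∈ fixedPoints G α)
  let fiber (s : Finset α) (ω : orbitRel.Quotient G α) : Finset α := s.filter (π · = ω)
  have hfiber : ∀ ω, 2 ≤ (fiber Finset.univ ω).card + (fiber fixed ω).card := by
    intro ω
    obtain ⟨x, rfl⟩ : ∃ x, π x = ω := Quotient.mk_surjective ω
    have hx_fiber : x ∈ fiber Finset.univ (π x) := by simp [fiber]
    by_cases hx : x ∈ fixedPoints G α
    · have hx_fixed : x ∈ fiber fixed (π x) := by simpa [fiber, fixed] using hx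
      have := Finset.card_pos.mpr ⟨x, hx_fiber⟩
      have := Finset.card_pos.mpr ⟨x, hx_fixed⟩
      omega
    · obtain ⟨g, hg⟩ : ∃ g : G, g • x ≠ x := by simpa [mem_fixedPoints] using hx
      have hgx : g • x ∈ fiber Finset.univ (π x) := by
        simp [fiber, π, Quotient.eq, orbitRel_apply, mem_orbit]
      have := Finset.one_lt_card.mpr ⟨g • x, hgx, x, hx_fiber, hg⟩
      omega
  have hsum (s : Finset α) : s.card = ∑ ω, (fiber s ω).card :=
    Finset.card_eq_sum_card_fiberwise fun _ _ => Finset.mem_univ _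
  calc 2 * Nat.card (orbitRel.Quotient G α)
      = ∑ _ω : orbitRel.Quotient G α, 2 := by simp [mul_comm]
    _ ≤ ∑ ω, ((fiber Finset.univ ω).card + (fiber fixed ω).card) :=
        Finset.sum_le_sum fun ω _ => hfiber ω
    _ = Nat.card α + Nat.card (fixedPoints G α) := by
        rw [Finset.sum_add_distrib, ← hsum, ← hsum, Finset.card_univ, Nat.card_eq_fintype_card,
          Nat.card_eq_fintype_card, Fintype.card_subtype]

end MulAction

theorem LinearMap.natCard_fixedPoints_add_const_le {K V : Type*} [Field K] [Finite K]
    [AddCommGroup V] [Module K V] [Module.Finite K V] (f : V →ₗ[K] V) (a : V)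
    (hfa : ¬(f = LinearMap.id ∧ a = 0)) :
    Nat.card (Function.fixedPoints fun x => f x + a) ≤ Nat.card K ^ (finrank K V - 1) := by
  rcases isEmpty_or_nonempty (Function.fixedPoints fun x => f x + a) with h | ⟨x₀, hx₀⟩
  · simp
  have hf : f ≠ LinearMap.id := by
    rintro rfl
    exact hfa ⟨rfl, by simpa [Function.IsFixedPt] using hx₀⟩
  have hker : ker (f - LinearMap.id) ≠ ⊤ := fun h =>
    hf (sub_eq_zero.mp (LinearMap.ker_eq_top.mp h))
  let toKer (x : Function.fixedPoints fun x => f x + a) : ker (f - LinearMap.id) :=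
    ⟨x - x₀, by
      have hx : f x + a = x := x.2
      have hx₀ : f x₀ + a = x₀ := hx₀
      rw [LinearMap.mem_ker, LinearMap.sub_apply, LinearMap.id_apply, map_sub,
        eq_sub_of_add_eq hx, eq_sub_of_add_eq hx₀]
      abel⟩
  have htoKer : Function.Injective toKer := fun x y hxy =>
    Subtype.ext (sub_left_injective (congrArg Subtype.val hxy))
  have := Module.finite_of_finite K (M := V)
  calc Nat.card (Function.fixedPoints fun x => f x + a)
      ≤ Nat.card (ker (f - LinearMap.id)) := Nat.card_le_card_of_injective toKer htoKer
    _ = Nat.card K ^ finrank K (ker (f - LinearMap.id)) := natCard_eq_pow_finrank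
    _ ≤ Nat.card K ^ (finrank K V - 1) :=
        Nat.pow_le_pow_right Nat.card_pos (Nat.le_sub_one_of_lt (Submodule.finrank_lt hker))

theorem stmt3_general {K : Type*} [Field K] [Fintype K] (n : ℕ) (hn : 1 ≤ n)
    (P : Matrix (Fin n) (Fin n) K) (a : Fin n → K)
    (hnt : ¬(P = 1 ∧ a = 0))
    (σ : Equiv.Perm (Fin n → K)) (hσ : ∀ x, σ x = P.mulVec x + a) :
    (Nat.card (MulAction.orbitRel.Quotient (Subgroup.zpowers σ) (Fin n → K)) : ℚ) ≤
      ((Fintype.card K : ℚ) ^ n + (Fintype.card K : ℚ) ^ (n - 1)) / 2 ∧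
    ((Fintype.card K : ℚ) ^ n + (Fintype.card K : ℚ) ^ (n - 1)) / 2 =
      ((Fintype.card K + 1) / (2 * Fintype.card K)) * (Fintype.card K : ℚ) ^ n := by
  have hfixed : fixedPoints (Subgroup.zpowers σ) (Fin n → K) =
      Function.fixedPoints fun x => Matrix.toLin' P x + a := by
    rw [fixedPoints_zpowers]
    ext x
    simp [Function.IsFixedPt, hσ]
  have hnt' : ¬(Matrix.toLin' P = LinearMap.id ∧ a = 0) := by
    rwa [← Matrix.toLin'_one, Matrix.toLin'.injective.eq_iff]
  have hcount := two_mul_card_orbitRel_quotient_le (G := Subgroup.zpowers σ) (α := Fin n → K)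
  have hfix := (Matrix.toLin' P).natCard_fixedPoints_add_const_le a hnt'
  rw [← hfixed, finrank_fin_fun] at hfix
  rw [Nat.card_fun, Nat.card_fin] at hcount
  rw [Fintype.card_eq_nat_card]
  constructor
  · rw [le_div_iff₀ two_pos]
    exact_mod_cast (by omega : _ * 2 ≤ _)
  · obtain ⟨m, rfl⟩ := Nat.exists_eq_add_of_le' hn
    have hq : (Nat.card K : ℚ) ≠ 0 := Nat.cast_ne_zero.mpr Nat.card_pos.ne'
    rw [Nat.add_sub_cancel, pow_succ]
    field_simp

theorem stmt3 {K : Type*} [Field K] [Fintype K] (n : ℕ) (hn : 1 ≤ n)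
    (P : Matrix (Fin n) (Fin n) K) (hP : IsUnit P) (a : Fin n → K)
    (hnt : ¬(P = 1 ∧ a = 0))
    (σ : Equiv.Perm (Fin n → K)) (hσ : ∀ x, σ x = P.mulVec x + a) :
    (Nat.card (MulAction.orbitRel.Quotient (Subgroup.zpowers σ) (Fin n → K)) : ℚ) ≤
      ((Fintype.card K : ℚ) ^ n + (Fintype.card K : ℚ) ^ (n - 1)) / 2 ∧
    ((Fintype.card K : ℚ) ^ n + (Fintype.card K : ℚ) ^ (n - 1)) / 2 =
      ((Fintype.card K + 1) / (2 * Fintype.card K)) * (Fintype.card K : ℚ) ^ n :=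
  stmt3_general n hn P a hnt σ hσ
end

section
/- Let g = (P, a, Q, b) be a nontrivial element of the EA-group Γ = AGL(n, q) × AGL(m, q), acting on functions F : F_q^n → F_q^m by (g·F)(x) = Q·F(Px + a) + b. Then the number of functions F fixed by g is at most q^(c·m·q^n), where c = max{(q+1)/(2q), 1 - 1/m} < 1. -/
/-!
If `x ↦ P x + a` is the identity, a fixed `F` takes values in the fixed set of `y ↦ Q y + b`,
a proper affine subspace, so there are at most `(q ^ (m - 1)) ^ (q ^ n)` of them. Otherwise
`σ : x ↦ P x + a` is a nontrivial affine permutation: its fixed points form a proper affine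
subspace, at most `q ^ (n - 1)` points, and all its other cycles have length at least two, so `σ`
has at most `(q ^ n + q ^ (n - 1)) / 2` cycles. Since `F x = Q F (σ x) + b`, a fixed `F` is
determined by its values on representatives of the cycles of `σ`.
-/

open Finset Equiv Matrix

theorem Submodule.card_mul_card_le_of_ne_top {K V : Type*} [Field K] [Finite K] [AddCommGroup V]
    [Module K V] [Finite V] {W : Submodule K V} (hW : W ≠ ⊤) :
    Nat.card K * Nat.card W ≤ Nat.card V := by
  have := Module.finite_of_finite K (M := V)
  rw [Module.natCard_eq_pow_finrank (K := K) (V := W),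
    Module.natCard_eq_pow_finrank (K := K) (V := V), ← pow_succ']
  exact Nat.pow_le_pow_right Nat.card_pos (Submodule.finrank_lt hW)

theorem LinearMap.card_mul_card_fiber_le {K V W : Type*} [Field K] [Finite K] [AddCommGroup V]
    [Module K V] [Finite V] [AddCommGroup W] [Module K W] {f : V →ₗ[K] W} (hf : f ≠ 0) (w : W) :
    Nat.card K * Nat.card (f ⁻¹' {w}) ≤ Nat.card V := by
  obtain ⟨x₀, hx₀⟩ | hempty := (f ⁻¹' {w}).eq_empty_or_nonempty.symm
  · have hfiber : f ⁻¹' {w} ≃ LinearMap.ker f :=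
      { toFun := fun x => ⟨x - x₀, by
        rw [LinearMap.mem_ker, map_sub, sub_eq_zero, hx₀]; exact x.2⟩
        invFun := fun x => ⟨x + x₀, by simp_all⟩
        left_inv := fun x => by simp
        right_inv := fun x => by simp }
    rw [Nat.card_congr hfiber]
    exact Submodule.card_mul_card_le_of_ne_top (LinearMap.ker_eq_top.not.mpr hf)
  · simp [hempty]

theorem Matrix.card_mul_card_setOf_mulVec_add_eq_le {K ι : Type*} [Field K] [Finite K] [Fintype ι]
    [DecidableEq ι] {M : Matrix ι ι K} {v : ι → K} (h : ¬(M = 1 ∧ v = 0)) :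
    Nat.card K * Nat.card {y : ι → K | M *ᵥ y + v = y} ≤ Nat.card (ι → K) := by
  by_cases hM : M = 1
  · subst hM
    have hv : v ≠ 0 := fun hv => h ⟨rfl, hv⟩
    simp [hv]
  · have hset : {y : ι → K | M *ᵥ y + v = y} = Matrix.toLin' (M - 1) ⁻¹' {-v} := by
      ext y
      simp [eq_neg_iff_add_eq_zero, sub_add_eq_add_sub, sub_eq_zero]
    rw [hset]
    refine LinearMap.card_mul_card_fiber_le ?_ _
    rwa [LinearEquiv.map_ne_zero_iff, sub_ne_zero]

theorem Setoid.two_mul_card_quotient_le {α : Type*} [Finite α] (s : Setoid α) (p : α → Prop)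
    (h : ∀ x, p x ∨ ∃ y, s y x ∧ y ≠ x) :
    2 * Nat.card (Quotient s) ≤ Nat.card α + Nat.card {x // p x} := by
  classical
  have := Fintype.ofFinite α
  simp only [Nat.card_eq_fintype_card]
  have hfib (t : Finset α) : #t = ∑ c : Quotient s, #{x ∈ t | Quotient.mk s x = c} :=
    card_eq_sum_card_fiberwise fun _ _ => mem_univ _
  rw [← card_univ (α := α), Fintype.card_subtype, hfib, hfib, ← sum_add_distrib, mul_comm,
    ← smul_eq_mul, ← card_univ, ← sum_const]
  refine sum_le_sum fun c _ => ?_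
  induction c using Quotient.inductionOn with | h x => ?_
  obtain hx | ⟨y, hyx, hne⟩ := h x
  · have h₁ : ({x' | Quotient.mk s x' = ⟦x⟧} : Finset α).Nonempty := ⟨x, by simp⟩
    have h₂ : ({x' ∈ ({x' | p x'} : Finset α) | Quotient.mk s x' = ⟦x⟧} : Finset α).Nonempty :=
      ⟨x, by simpa using hx⟩
    have := card_pos.mpr h₁
    have := card_pos.mpr h₂
    omega
  · have : 1 < #{x' ∈ univ | Quotient.mk s x' = ⟦x⟧} :=
      one_lt_card.mpr ⟨y, by simpa using Quotient.sound hyx, x, by simp, hne⟩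
    omega

theorem Equiv.Perm.two_mul_card_cycles_le {α : Type*} [Finite α] (σ : Perm α) :
    2 * Nat.card (Quotient (Perm.SameCycle.setoid σ)) ≤
      Nat.card α + Nat.card (Function.fixedPoints σ) := by
  refine Setoid.two_mul_card_quotient_le _ _ fun x => or_iff_not_imp_left.mpr fun hx =>
    ⟨σ x, Perm.sameCycle_apply_left.mpr (Perm.SameCycle.refl σ x), hx⟩

theorem Equiv.Perm.two_mul_mul_card_cycles_le {α : Type*} [Finite α] {σ : Perm α} {r : ℕ}
    (hσ : r * Nat.card (Function.fixedPoints σ) ≤ Nat.card α) :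
    2 * r * Nat.card (Quotient (Perm.SameCycle.setoid σ)) ≤ (r + 1) * Nat.card α := by
  nlinarith [σ.two_mul_card_cycles_le]

theorem Equiv.Perm.SameCycle.eq_of_semiconj {α β : Type*} [Finite α] {σ : Perm α} {e : β → β}
    {F G : α → β} (hF : ∀ x, e (F (σ x)) = F x) (hG : ∀ x, e (G (σ x)) = G x) {x y : α}
    (hxy : σ.SameCycle y x) (hy : F y = G y) : F x = G x := by
  obtain ⟨i, -, rfl⟩ := (Perm.sameCycle_inv.mpr hxy).exists_pow_eq'
  clear hxy
  induction i with
  | zero => simpa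
  | succ i ih => rw [pow_succ', Perm.mul_apply, ← hF, ← hG, Perm.coe_inv, apply_symm_apply, ih]

theorem Equiv.Perm.card_semiconj_le {α β : Type*} [Finite α] [Finite β] (σ : Perm α) (e : β → β) :
    Nat.card {F : α → β | ∀ x, e (F (σ x)) = F x} ≤
      Nat.card β ^ Nat.card (Quotient (Perm.SameCycle.setoid σ)) := by
  rw [← Nat.card_fun]
  refine Nat.card_le_card_of_injective (fun F c => F.1 c.out) fun F G hFG => ?_
  ext x
  exact (Quotient.mk_out (s := Perm.SameCycle.setoid σ) x).eq_of_semiconj F.2 G.2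
    (congrFun hFG ⟦x⟧)

theorem Function.card_setOf_forall_isFixedPt {α β : Type*} [Finite α] (e : β → β) :
    Nat.card {F : α → β | ∀ x, e (F x) = F x} = Nat.card (Function.fixedPoints e) ^ Nat.card α :=
  (Nat.card_congr (Equiv.subtypePiEquivPi (p := fun _ y => e y = y))).trans Nat.card_fun

theorem Nat.cast_le_rpow_of_le_pow {N q e : ℕ} {E : ℝ} (hq : 1 ≤ q) (hN : N ≤ q ^ e)
    (he : (e : ℝ) ≤ E) : (N : ℝ) ≤ (q : ℝ) ^ E :=
  calc (N : ℝ) ≤ (q : ℝ) ^ (e : ℝ) := by rw [Real.rpow_natCast]; exact_mod_cast hN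
    _ ≤ (q : ℝ) ^ E := Real.rpow_le_rpow_of_exponent_le (by exact_mod_cast hq) he

theorem Matrix.card_setOf_forall_mulVec_add_eq_le {K ι α : Type*} [Field K] [Finite K]
    [Fintype ι] [DecidableEq ι] [Finite α] {M : Matrix ι ι K} {v : ι → K}
    (h : ¬(M = 1 ∧ v = 0)) :
    Nat.card {F : α → ι → K | ∀ x, M *ᵥ F x + v = F x} ≤
      Nat.card K ^ ((Fintype.card ι - 1) * Nat.card α) := by
  obtain hι | hι := isEmpty_or_nonempty ι
  · exact absurd ⟨Subsingleton.elim _ _, Subsingleton.elim _ _⟩ h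
  have hfix := card_mul_card_setOf_mulVec_add_eq_le h
  rw [Nat.card_fun, Nat.card_eq_fintype_card (α := ι), ← Nat.sub_add_cancel Fintype.card_pos,
    pow_succ'] at hfix
  rw [Function.card_setOf_forall_isFixedPt fun y => M *ᵥ y + v, pow_mul]
  exact Nat.pow_le_pow_left (Nat.le_of_mul_le_mul_left hfix Nat.card_pos) _

theorem stmt8_general {K : Type*} [Field K] [Fintype K] (n m : ℕ) (hm : 1 ≤ m)
    (P : Matrix (Fin n) (Fin n) K) (hP : IsUnit P) (a : Fin n → K)
    (Q : Matrix (Fin m) (Fin m) K) (b : Fin m → K)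
    (hnt : ¬(P = 1 ∧ a = 0 ∧ Q = 1 ∧ b = 0)) :
    (Nat.card {F : (Fin n → K) → (Fin m → K) |
        ∀ x, Q.mulVec (F (P.mulVec x + a)) + b = F x} : ℝ) ≤
      (Fintype.card K : ℝ) ^
        ((max (((Fintype.card K : ℝ) + 1) / (2 * (Fintype.card K : ℝ))) (1 - 1 / (m : ℝ)))
          * (m : ℝ) * (Fintype.card K : ℝ) ^ n) ∧
    max (((Fintype.card K : ℝ) + 1) / (2 * (Fintype.card K : ℝ))) (1 - 1 / (m : ℝ)) < 1 := by
  rw [← Nat.card_eq_fintype_card]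
  set q := Nat.card K
  have hq : 1 < q := Finite.one_lt_card
  have hqR : (1 : ℝ) < q := by exact_mod_cast hq
  have hmR : (0 : ℝ) < m := by exact_mod_cast hm
  have hcard (k : ℕ) : Nat.card (Fin k → K) = q ^ k := by simp [q]
  refine ⟨?_, max_lt ((div_lt_one (by positivity)).mpr (by linarith)) (by simp [hmR])⟩
  by_cases hPa : P = 1 ∧ a = 0
  · obtain ⟨rfl, rfl⟩ := hPa
    simp only [one_mulVec, add_zero]
    have hcount := card_setOf_forall_mulVec_add_eq_le (α := Fin n → K) fun h => hnt ⟨rfl, rfl, h⟩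
    rw [hcard, Fintype.card_fin] at hcount
    refine Nat.cast_le_rpow_of_le_pow hq.le hcount ?_
    calc (((m - 1) * q ^ n : ℕ) : ℝ) = (1 - 1 / m) * m * q ^ n := by
          push_cast [Nat.cast_sub hm]; field_simp
      _ ≤ _ := by gcongr; exact le_max_right _ _
  · let σ : Perm (Fin n → K) := Equiv.ofBijective (fun x => P *ᵥ x + a)
      ((Equiv.addRight a).bijective.comp
        ⟨mulVec_injective_iff_isUnit.mpr hP, mulVec_surjective_iff_isUnit.mpr hP⟩)
    have hcount := σ.card_semiconj_le fun y => Q *ᵥ y + b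
    rw [hcard, ← pow_mul] at hcount
    have hcycles := Perm.two_mul_mul_card_cycles_le (σ := σ) (r := q)
      (card_mul_card_setOf_mulVec_add_eq_le hPa)
    rw [hcard] at hcycles
    refine Nat.cast_le_rpow_of_le_pow hq.le hcount ?_
    set k := Nat.card (Quotient (Perm.SameCycle.setoid σ))
    calc ((m * k : ℕ) : ℝ) = m * (2 * q * k) / (2 * q) := by push_cast; field_simp
      _ ≤ m * ((q + 1) * q ^ n) / (2 * q) := by gcongr m * ?_ / _; exact_mod_cast hcycles
      _ = (q + 1) / (2 * q) * m * q ^ n := by ring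
      _ ≤ _ := by gcongr; exact le_max_left _ _

theorem stmt8 {K : Type*} [Field K] [Fintype K] (n m : ℕ) (hn : 1 ≤ n) (hm : 1 ≤ m)
    (P : Matrix (Fin n) (Fin n) K) (hP : IsUnit P) (a : Fin n → K)
    (Q : Matrix (Fin m) (Fin m) K) (hQ : IsUnit Q) (b : Fin m → K)
    (hnt : ¬(P = 1 ∧ a = 0 ∧ Q = 1 ∧ b = 0)) :
    (Nat.card {F : (Fin n → K) → (Fin m → K) |
        ∀ x, Q.mulVec (F (P.mulVec x + a)) + b = F x} : ℝ) ≤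
      (Fintype.card K : ℝ) ^
        ((max (((Fintype.card K : ℝ) + 1) / (2 * (Fintype.card K : ℝ))) (1 - 1 / (m : ℝ)))
          * (m : ℝ) * (Fintype.card K : ℝ) ^ n) ∧
    max (((Fintype.card K : ℝ) + 1) / (2 * (Fintype.card K : ℝ))) (1 - 1 / (m : ℝ)) < 1 :=
  stmt8_general n m hm P hP a Q b hnt
end
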